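/- arXiv:1503.07192 — 2 statements merged into one kernel-verified Lean document; each statement's English description precedes it below -/
import Mathlib

section
/- (Lower bound direction of the query formula, distinct components) Let v1, v2 be vertices with P v1 = i, P v2 = j, and i ≠ j. Then for every walk π in G from v1 to v2 there exist b1 ∈ B(C_i) and b2 ∈ B(C_j) such that the length of π is at least dist_{C_i}(v1,b1) + dist_BG(b1,b2) + dist_{C_j}(b2,v2). -/
/-! Induct on the walk, keeping its endpoint `v` fixed. A walk from `u` either stays in the
component of `v`, or splits into a piece inside the component of `u` up to a boundary vertex `b1`,
a route through the boundary graph, and a piece inside the component of `v`. Prepending an edge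
inside a component lengthens the first piece; prepending a crossing edge `u x` makes `u` and `x`
boundary vertices, and the route `u → x → b1` is one cross edge and one intra-component edge of
the boundary graph, so it is absorbed into the boundary-graph part. -/

open scoped ENNReal

namespace SPQ

variable {V : Type*} {ι : Type*}

/-- The length of a walk: the sum of the weights `w` over its consecutive edges. -/
noncomputable def wlen (w : V → V → ℝ≥0∞) {G : SimpleGraph V} {u v : V} (p : G.Walk u v) : ℝ≥0∞ :=
  (p.darts.map fun d => w d.toProd.1 d.toProd.2).sum

/-- The shortest-path distance: infimum of lengths of all walks (⊤ if none exists). -/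
noncomputable def gdist (G : SimpleGraph V) (w : V → V → ℝ≥0∞) (u v : V) : ℝ≥0∞ :=
  ⨅ p : G.Walk u v, wlen w p

/-- The component `C_i`: the subgraph of `G` induced on `P ⁻¹ {i}`
(as a graph on `V`: edges of `G` with both endpoints mapped to `i` by `P`). -/
def comp (G : SimpleGraph V) (P : V → ι) (i : ι) : SimpleGraph V where
  Adj u v := G.Adj u v ∧ P u = i ∧ P v = i
  symm := ⟨fun _ _ h => ⟨h.1.symm, h.2.2, h.2.1⟩⟩
  loopless := ⟨fun u h => G.irrefl h.1⟩

/-- The boundary `B(C_i)`: vertices of component `i` having a `G`-neighbor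
in a different component. -/
def bdry (G : SimpleGraph V) (P : V → ι) (i : ι) : Set V :=
  {v | P v = i ∧ ∃ u, G.Adj v u ∧ P u ≠ i}

/-- The set `B` of all boundary vertices. -/
def bdryAll (G : SimpleGraph V) (P : V → ι) : Set V :=
  ⋃ i, bdry G P i

/-- The boundary graph `BG`: distinct boundary vertices `b1, b2` are adjacent
iff `P b1 = P b2` or `G.Adj b1 b2`. -/
def BGraph (G : SimpleGraph V) (P : V → ι) : SimpleGraph V where
  Adj b1 b2 := b1 ≠ b2 ∧ b1 ∈ bdryAll G P ∧ b2 ∈ bdryAll G P ∧ (P b1 = P b2 ∨ G.Adj b1 b2)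
  symm := by
    constructor
    intro u v h
    refine ⟨h.1.symm, h.2.2.1, h.2.1, ?_⟩
    rcases h.2.2.2 with h' | h'
    · exact Or.inl h'.symm
    · exact Or.inr h'.symm
  loopless := ⟨fun u h => h.1 rfl⟩

open Classical in
/-- The edge weight of the boundary graph:
`wt b1 b2 = dist_{C_{P b1}}(b1, b2)` if `P b1 = P b2`, and `w b1 b2` otherwise. -/
noncomputable def wt (G : SimpleGraph V) (P : V → ι) (w : V → V → ℝ≥0∞) (b1 b2 : V) : ℝ≥0∞ :=
  if P b1 = P b2 then gdist (comp G P (P b1)) w b1 b2 else w b1 b2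

section Walks

variable {G : SimpleGraph V} {w : V → V → ℝ≥0∞} {u v x : V}

@[simp]
lemma wlen_nil : wlen w (SimpleGraph.Walk.nil : G.Walk u u) = 0 := by
  simp [wlen]

@[simp]
lemma wlen_cons (h : G.Adj u x) (p : G.Walk x v) : wlen w (p.cons h) = w u x + wlen w p := by
  simp [wlen]

lemma gdist_le_wlen (p : G.Walk u v) : gdist G w u v ≤ wlen w p :=
  iInf_le _ p

@[simp]
lemma gdist_self : gdist G w u u = 0 :=
  nonpos_iff_eq_zero.1 ((gdist_le_wlen .nil).trans_eq wlen_nil)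

lemma gdist_le_add_of_adj (h : G.Adj u x) : gdist G w u v ≤ w u x + gdist G w x v := by
  unfold gdist
  rw [ENNReal.add_iInf]
  exact le_iInf fun q => iInf_le_of_le (q.cons h) (wlen_cons h q).le

end Walks

section Boundary

variable {G : SimpleGraph V} {P : V → ι} {w : V → V → ℝ≥0∞} {u v x b : V}

lemma mem_bdry_of_adj (h : G.Adj u x) (hP : P u ≠ P x) : u ∈ bdry G P (P u) :=
  ⟨rfl, x, h, hP.symm⟩

lemma mem_bdryAll_of_mem_bdry {i : ι} (h : u ∈ bdry G P i) : u ∈ bdryAll G P :=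
  Set.mem_iUnion.2 ⟨i, h⟩

lemma gdist_BGraph_le_add_of_cross (h : G.Adj u x) (hP : P u ≠ P x) :
    gdist (BGraph G P) (wt G P w) u v ≤ w u x + gdist (BGraph G P) (wt G P w) x v := by
  have hadj : (BGraph G P).Adj u x :=
    ⟨h.ne, mem_bdryAll_of_mem_bdry (mem_bdry_of_adj h hP),
      mem_bdryAll_of_mem_bdry (mem_bdry_of_adj h.symm hP.symm), Or.inr h⟩
  simpa [wt, hP] using gdist_le_add_of_adj (w := wt G P w) (v := v) hadj

lemma gdist_BGraph_le_add_of_same (hx : x ∈ bdryAll G P) (hb : b ∈ bdryAll G P)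
    (hP : P x = P b) :
    gdist (BGraph G P) (wt G P w) x v ≤
      gdist (comp G P (P x)) w x b + gdist (BGraph G P) (wt G P w) b v := by
  rcases eq_or_ne x b with rfl | hxb
  · simp
  · have hadj : (BGraph G P).Adj x b := ⟨hxb, hx, hb, Or.inl hP⟩
    simpa [wt, hP] using gdist_le_add_of_adj (w := wt G P w) (v := v) hadj

noncomputable def viaBdry (G : SimpleGraph V) (P : V → ι) (w : V → V → ℝ≥0∞) (u b1 b2 v : V) :
    ℝ≥0∞ :=
  gdist (comp G P (P u)) w u b1 + gdist (BGraph G P) (wt G P w) b1 b2 +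
    gdist (comp G P (P v)) w b2 v

lemma viaBdry_le_add_of_same (h : G.Adj u x) (hP : P u = P x) (b1 b2 : V) :
    viaBdry G P w u b1 b2 v ≤ w u x + viaBdry G P w x b1 b2 v := by
  have hstep := gdist_le_add_of_adj (G := comp G P (P u)) (w := w) (v := b1) ⟨h, rfl, hP.symm⟩
  simp only [viaBdry, ← hP, ← add_assoc]
  gcongr

lemma viaBdry_le_add_of_cross (h : G.Adj u x) (hP : P u ≠ P x) {b1 : V}
    (hb1 : b1 ∈ bdry G P (P x)) (b2 : V) :
    viaBdry G P w u u b2 v ≤ w u x + viaBdry G P w x b1 b2 v := by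
  have hx := mem_bdryAll_of_mem_bdry (mem_bdry_of_adj h.symm hP.symm)
  have hBG : gdist (BGraph G P) (wt G P w) u b2 ≤
      w u x + (gdist (comp G P (P x)) w x b1 + gdist (BGraph G P) (wt G P w) b1 b2) :=
    (gdist_BGraph_le_add_of_cross h hP).trans
      (by gcongr; exact gdist_BGraph_le_add_of_same hx (mem_bdryAll_of_mem_bdry hb1) hb1.1.symm)
  calc viaBdry G P w u u b2 v
      = gdist (BGraph G P) (wt G P w) u b2 + gdist (comp G P (P v)) w b2 v := by
        simp [viaBdry]
    _ ≤ w u x + (gdist (comp G P (P x)) w x b1 + gdist (BGraph G P) (wt G P w) b1 b2) +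
          gdist (comp G P (P v)) w b2 v := by gcongr
    _ = w u x + viaBdry G P w x b1 b2 v := by simp only [viaBdry, add_assoc]

lemma viaBdry_self_self : viaBdry G P w x x x v = gdist (comp G P (P v)) w x v := by
  simp [viaBdry]

theorem comp_dist_le_or_exists_viaBdry_le (p : G.Walk u v) :
    (P u = P v ∧ gdist (comp G P (P v)) w u v ≤ wlen w p) ∨
      ∃ b1 ∈ bdry G P (P u), ∃ b2 ∈ bdry G P (P v), viaBdry G P w u b1 b2 v ≤ wlen w p := by
  induction p with
  | nil => simp
  | @cons u x v h p ih =>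
    rw [wlen_cons]
    rcases eq_or_ne (P u) (P x) with hP | hP
    · rcases ih with ⟨hx, hle⟩ | ⟨b1, hb1, b2, hb2, hle⟩
      · exact .inl ⟨hP.trans hx,
          (gdist_le_add_of_adj (G := comp G P (P v)) ⟨h, hP.trans hx, hx⟩).trans (by gcongr)⟩
      · exact .inr ⟨b1, hP ▸ hb1, b2, hb2,
          (viaBdry_le_add_of_same h hP b1 b2).trans (by gcongr)⟩
    · -- a walk leaving its component enters the boundary graph at its first vertex
      refine .inr ⟨u, mem_bdry_of_adj h hP, ?_⟩
      have hx := mem_bdry_of_adj h.symm hP.symm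
      rcases ih with ⟨hxv, hle⟩ | ⟨b1, hb1, b2, hb2, hle⟩
      · refine ⟨x, hxv ▸ hx, (viaBdry_le_add_of_cross h hP hx x).trans ?_⟩
        rw [viaBdry_self_self]
        gcongr
      · exact ⟨b2, hb2, (viaBdry_le_add_of_cross h hP hb1 b2).trans (by gcongr)⟩

end Boundary

theorem stmt12_general {V : Type*} {ι : Type*}
    (G : SimpleGraph V) (w : V → V → ℝ≥0∞)
    (P : V → ι) (i j : ι) (v1 v2 : V) (h1 : P v1 = i) (h2 : P v2 = j) (hij : i ≠ j)
    (π : G.Walk v1 v2) :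
    ∃ b1 ∈ bdry G P i, ∃ b2 ∈ bdry G P j,
      gdist (comp G P i) w v1 b1 + gdist (BGraph G P) (wt G P w) b1 b2 +
        gdist (comp G P j) w b2 v2 ≤ wlen w π := by
  subst h1 h2
  rcases comp_dist_le_or_exists_viaBdry_le (w := w) π with ⟨hsame, -⟩ | hvia
  · exact absurd hsame hij
  · exact hvia

/-- Lower bound direction of the query formula, distinct components:
Let `v1, v2` be vertices with `P v1 = i`, `P v2 = j`, and `i ≠ j`. Then for every walk
`π` in `G` from `v1` to `v2` there exist `b1 ∈ B(C_i)` and `b2 ∈ B(C_j)` such that the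
length of `π` is at least `dist_{C_i}(v1,b1) + dist_BG(b1,b2) + dist_{C_j}(b2,v2)`. -/
theorem stmt12 {V : Type*} {ι : Type*} [Fintype V] [Fintype ι]
    (G : SimpleGraph V) (w : V → V → ℝ≥0∞)
    (hsymm : ∀ u v, w u v = w v u) (hfin : ∀ u v, G.Adj u v → w u v < ⊤)
    (P : V → ι) (i j : ι) (v1 v2 : V) (h1 : P v1 = i) (h2 : P v2 = j) (hij : i ≠ j)
    (π : G.Walk v1 v2) :
    ∃ b1 ∈ bdry G P i, ∃ b2 ∈ bdry G P j,
      gdist (comp G P i) w v1 b1 + gdist (BGraph G P) (wt G P w) b1 b2 +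
        gdist (comp G P j) w b2 v2 ≤ wlen w π :=
  stmt12_general G w P i j v1 v2 h1 h2 hij π

end SPQ
end

section
/- Every walk in G between two boundary vertices b1, b2 ∈ B can be decomposed into consecutive segments, each of which either is a single edge of G joining two boundary vertices in different components, or lies entirely within a single component C_i and has both endpoints in B(C_i) ∪ {b1, b2}; in particular, the sequence of boundary vertices visited by the walk, taken in order, yields endpoints of segments whose within-component lengths are each at least the corresponding dist_{C_i} value. -/
open scoped ENNReal

namespace SPQ

variable {V : Type*} {ι : Type*}

/-- A decomposition of a walk into consecutive segments, each of which is either a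
single edge of `G` joining two boundary vertices in different components, or lies
entirely within a single component `C_{P u}` with both endpoints in the allowed set `S`
(instantiated below with `B(C_i) ∪ {b1, b2}`, via `B ∪ {b1, b2}` together with the
within-component condition); each within-component segment's length is at least the
corresponding `dist_{C_i}` value between its endpoints. -/
inductive GoodDecomp (G : SimpleGraph V) (P : V → ι) (w : V → V → ℝ≥0∞) (S : Set V) :
    ∀ {u v : V}, G.Walk u v → Prop
  | nil {v : V} : GoodDecomp G P w S (SimpleGraph.Walk.nil : G.Walk v v)
  | crossEdge {u v x : V} (h : G.Adj u v)
      (hu : u ∈ bdryAll G P) (hv : v ∈ bdryAll G P) (hne : P u ≠ P v)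
      (p : G.Walk v x) :
      GoodDecomp G P w S p → GoodDecomp G P w S (SimpleGraph.Walk.cons h p)
  | inComp {u v x : V} (q : G.Walk u v) (hq : ∀ y ∈ q.support, P y = P u)
      (hu : u ∈ S) (hv : v ∈ S)
      (hlen : gdist (comp G P (P u)) w u v ≤ wlen w q)
      (p : G.Walk v x) :
      GoodDecomp G P w S p → GoodDecomp G P w S (q.append p)

end SPQ
namespace SPQ

/-!
Scan the walk while keeping the part `q` of the current maximal run inside one component
already traversed. The run ends either at `b2` or just before an edge leaving the component;
both ends of such an edge are boundary vertices, so the run is an admissible segment, the edge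
is a crossing edge, and the scan restarts at a boundary vertex. A run lying in `C_i` transfers
to a walk of `C_i` of the same length, which bounds `dist_{C_i}` from above.
-/

open SimpleGraph

section

variable {V : Type*} {ι : Type*} {G : SimpleGraph V} {P : V → ι} {w : V → V → ℝ≥0∞}

lemma wlen_transfer {H : SimpleGraph V} {u v : V} (p : G.Walk u v)
    (hp : ∀ e ∈ p.edges, e ∈ H.edgeSet) : wlen w (p.transfer H hp) = wlen w p := by
  induction p with
  | nil => rfl
  | cons h p ih => exact congrArg (w _ _ + ·) (ih _)

lemma gdist_comp_le_wlen {i : ι} {u v : V} (q : G.Walk u v) (hq : ∀ y ∈ q.support, P y = i) :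
    gdist (comp G P i) w u v ≤ wlen w q := by
  have hedges : ∀ e ∈ q.edges, e ∈ (comp G P i).edgeSet := by
    rintro ⟨x, y⟩ he
    exact ⟨q.adj_of_mem_edges he, hq x (q.fst_mem_support_of_mem_edges he),
      hq y (q.snd_mem_support_of_mem_edges he)⟩
  calc gdist (comp G P i) w u v ≤ wlen w (q.transfer _ hedges) := iInf_le _ _
    _ = wlen w q := wlen_transfer q hedges

lemma mem_bdryAll_of_adj {u v : V} (h : G.Adj u v) (hne : P u ≠ P v) : u ∈ bdryAll G P :=
  Set.mem_iUnion.mpr ⟨P u, rfl, v, h, hne.symm⟩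

lemma goodDecomp_append {S : Set V} (hS : bdryAll G P ⊆ S) {c b : V} (hb : b ∈ S)
    (p : G.Walk c b) {a : V} (q : G.Walk a c) (ha : a ∈ S) (hq : ∀ y ∈ q.support, P y = P a) :
    GoodDecomp G P w S (q.append p) := by
  induction p generalizing a with
  | nil => exact .inComp q hq ha hb (gdist_comp_le_wlen q hq) _ .nil
  | @cons c d b h p ih =>
    have hc : P c = P a := hq c q.end_mem_support
    by_cases hd : P d = P a
    · have hq' : ∀ y ∈ (q.concat h).support, P y = P a := by
        simp only [Walk.support_concat, List.mem_append, List.mem_singleton]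
        rintro y (hy | rfl)
        exacts [hq y hy, hd]
      rw [← Walk.concat_append]
      exact ih hb (q.concat h) ha hq'
    · have hcd : P c ≠ P d := hc ▸ Ne.symm hd
      have hc_mem : c ∈ bdryAll G P := mem_bdryAll_of_adj h hcd
      have hd_mem : d ∈ bdryAll G P := mem_bdryAll_of_adj h.symm hcd.symm
      have hrest : GoodDecomp G P w S p := by
        simpa using ih hb Walk.nil (hS hd_mem) (by simp)
      exact .inComp q hq ha (hS hc_mem) (gdist_comp_le_wlen q hq) _
        (.crossEdge h hc_mem hd_mem hcd p hrest)

lemma goodDecomp_of_mem {S : Set V} (hS : bdryAll G P ⊆ S) {a b : V} (ha : a ∈ S)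
    (hb : b ∈ S) (p : G.Walk a b) : GoodDecomp G P w S p := by
  simpa using goodDecomp_append hS hb p Walk.nil ha (by simp)

end

theorem stmt14_general {V : Type*} {ι : Type*}
    (G : SimpleGraph V) (w : V → V → ℝ≥0∞)
    (P : V → ι) (b1 b2 : V)
    (π : G.Walk b1 b2) :
    GoodDecomp G P w (bdryAll G P ∪ {b1, b2}) π :=
  goodDecomp_of_mem Set.subset_union_left (by simp) (by simp) π

/-- Every walk in `G` between two boundary vertices `b1, b2 ∈ B` can be
decomposed into consecutive segments, each of which either is a single edge of `G`
joining two boundary vertices in different components, or lies entirely within a single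
component `C_i` and has both endpoints in `B(C_i) ∪ {b1, b2}`; in particular, the
sequence of boundary vertices visited by the walk, taken in order, yields endpoints of
segments whose within-component lengths are each at least the corresponding
`dist_{C_i}` value. -/
theorem stmt14 {V : Type*} {ι : Type*} [Fintype V] [Fintype ι]
    (G : SimpleGraph V) (w : V → V → ℝ≥0∞)
    (hsymm : ∀ u v, w u v = w v u) (hfin : ∀ u v, G.Adj u v → w u v < ⊤)
    (P : V → ι) (b1 b2 : V)
    (hb1 : b1 ∈ bdryAll G P) (hb2 : b2 ∈ bdryAll G P)
    (π : G.Walk b1 b2) :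
    GoodDecomp G P w (bdryAll G P ∪ {b1, b2}) π :=
  stmt14_general G w P b1 b2 π

end SPQ
end
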